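/- arXiv:0905.4312 — 5 statements merged into one kernel-verified Lean document; each statement's English description precedes it below -/
import Mathlib

section
/- Let c > 0 be small and γ : [0,1] → ℂ² be given by γ(t) = (c·e^{2πit}, c). Then a continuous branch x(t) of (−(c¹⁵ + c⁸e^{14πit}))^{1/5} along γ satisfies x(1) ≠ x(0); hence the loop γ does not lift to a closed loop in the 5-fold covering {x⁵ + z¹⁵ + y⁷z = 0} → ℂ² over the complement of the branch locus, and consequently that covering is connected over a neighborhood of γ. -/
/-!
Write `f(t) = -(c¹⁵ + c⁸ e^{14πit})`. For `0 < c < 1` the term `c⁸ e^{14πit}` dominates, so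
`f(t) = -e^{14πit} (c⁸ + c¹⁵ e^{-14πit})` with the second factor in the right half-plane, and
`x₀(t) = e^{(1+14t)πi/5} (c⁸ + c¹⁵ e^{-14πit})^{1/5}` (principal branch) is a continuous fifth root
of `f` on all of `ℝ` with `x₀(t + 1) = η x₀(t)`, where `η = e^{14πi/5}` is a primitive fifth root
of unity. Any continuous fifth root of `f` on `[0,1]` differs from `x₀` by a continuous, hence
constant, fifth root of unity, so it is not closed either. Since `η` generates all fifth roots of
unity, every point of the fibre over `t` is `x₀(t + k)` for some `k`, so the part of the surface
over the loop is the image of the line under `t ↦ (x₀(t), c e^{2πit}, c)` and thus connected.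
-/

open Complex Set
open scoped Real

theorem IsPreconnected.eq_of_pow_eq_one {X K : Type*} [TopologicalSpace X] [CommRing K]
    [IsDomain K] [TopologicalSpace K] [T1Space K] {S : Set X} (hS : IsPreconnected S)
    {f : X → K} (hf : ContinuousOn f S) {n : ℕ} (hn : n ≠ 0) (h1 : ∀ t ∈ S, f t ^ n = 1)
    {s t : X} (hs : s ∈ S) (ht : t ∈ S) : f s = f t := by
  have hfin : {z : K | z ^ n = 1}.Finite :=
    (Polynomial.nthRoots n (1 : K)).finite_toSet.subset fun z hz => by
      simpa [Polynomial.mem_nthRoots (Nat.pos_of_ne_zero hn)] using hz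
  exact hS.constant_of_mapsTo hfin.isDiscrete hf h1 hs ht

theorem IsPreconnected.div_eq_div_of_pow_eq_pow {X K : Type*} [TopologicalSpace X] [Field K]
    [TopologicalSpace K] [T1Space K] [IsTopologicalDivisionRing K] {S : Set X}
    (hS : IsPreconnected S) {x y : X → K} (hx : ContinuousOn x S) (hy : ContinuousOn y S)
    (hy0 : ∀ t ∈ S, y t ≠ 0) {n : ℕ} (hn : n ≠ 0) (hxy : ∀ t ∈ S, x t ^ n = y t ^ n)
    {s t : X} (hs : s ∈ S) (ht : t ∈ S) : x s / y s = x t / y t :=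
  hS.eq_of_pow_eq_one (hx.div hy hy0) hn
    (fun t ht => by rw [Pi.div_apply, div_pow, hxy t ht, div_self (pow_ne_zero _ (hy0 t ht))]) hs ht

theorem periodic_exp_two_pi_mul_I_mul : Function.Periodic (fun t : ℝ => exp (2 * π * I * t)) 1 :=
  fun t => by simpa [mul_add] using exp_periodic (2 * π * I * t)

theorem mul_exp_two_pi_mul_I_pow_seven_mul (c : ℂ) (t : ℝ) :
    (c * exp (2 * π * I * t)) ^ 7 * c = c ^ 8 * exp (14 * π * I * t) := by
  rw [mul_pow, ← exp_nat_mul]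
  ring_nf

theorem isPrimitiveRoot_exp_fourteen_pi_div_five :
    IsPrimitiveRoot (exp (2 * π * I * (7 / 5))) 5 := by
  exact_mod_cast isPrimitiveRoot_exp_of_coprime 7 5 (by norm_num) (by norm_num)

noncomputable def fifthRootAlongLoop (c t : ℝ) : ℂ :=
  exp ((1 + 14 * t) * π * I / 5) *
    ((c : ℂ) ^ 8 + (c : ℂ) ^ 15 * exp (-(14 * π * I * t))) ^ (5⁻¹ : ℂ)

theorem fifthRootAlongLoop_pow_five (c t : ℝ) :
    fifthRootAlongLoop c t ^ 5 = -((c : ℂ) ^ 15 + (c : ℂ) ^ 8 * exp (14 * π * I * t)) := by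
  have hexp : exp ((1 + 14 * t) * π * I / 5) ^ 5 = -exp (14 * π * I * t) := by
    rw [← exp_nat_mul,
      show ((5 : ℕ) : ℂ) * ((1 + 14 * t) * π * I / 5) = π * I + 14 * π * I * t by push_cast; ring,
      exp_add, exp_pi_mul_I, neg_one_mul]
  have hinv : exp (14 * π * I * t) * exp (-(14 * π * I * t)) = 1 := by rw [← exp_add]; simp
  rw [fifthRootAlongLoop, mul_pow, hexp, cpow_ofNat_inv_pow]
  linear_combination (-(c : ℂ) ^ 15) * hinv

theorem fifthRootAlongLoop_add_one (c t : ℝ) :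
    fifthRootAlongLoop c (t + 1) = exp (2 * π * I * (7 / 5)) * fifthRootAlongLoop c t := by
  have hphase : exp ((1 + 14 * ↑(t + 1)) * π * I / 5) =
      exp (2 * π * I * (7 / 5)) * exp ((1 + 14 * t) * π * I / 5) := by
    rw [← exp_add]; push_cast; ring_nf
  have hbase : exp (-(14 * π * I * ↑(t + 1))) = exp (-(14 * π * I * t)) := by
    rw [show -(14 * π * I * ↑(t + 1)) = -(14 * π * I * t) - (7 : ℤ) * (2 * π * I) by
      push_cast; ring]
    exact exp_periodic.sub_int_mul_eq 7
  rw [fifthRootAlongLoop, fifthRootAlongLoop, hphase, hbase, mul_assoc]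

theorem fifthRootAlongLoop_add_nat (c t : ℝ) (k : ℕ) :
    fifthRootAlongLoop c (t + k) = exp (2 * π * I * (7 / 5)) ^ k * fifthRootAlongLoop c t := by
  induction k with
  | zero => simp
  | succ k ih => rw [Nat.cast_succ, ← add_assoc, fifthRootAlongLoop_add_one, ih, pow_succ']; ring

section SmallRadius

variable {c : ℝ} (hc₀ : 0 < c) (hc₁ : c < 1)
include hc₀ hc₁

theorem re_pow_eight_add_pow_fifteen_mul_exp_pos (t : ℝ) :
    0 < ((c : ℂ) ^ 8 + (c : ℂ) ^ 15 * exp (-(14 * π * I * t))).re := by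
  have hnorm : ‖(c : ℂ) ^ 15 * exp (-(14 * π * I * t))‖ = c ^ 15 := by
    simp [norm_exp, abs_of_pos hc₀]
  have hre := neg_le_of_abs_le ((abs_re_le_norm _).trans hnorm.le)
  have hc : c ^ 15 < c ^ 8 := pow_lt_pow_right_of_lt_one₀ hc₀ hc₁ (by norm_num)
  have h8 : ((c : ℂ) ^ 8).re = c ^ 8 := by norm_cast
  rw [add_re, h8]
  linarith

theorem continuous_fifthRootAlongLoop : Continuous (fifthRootAlongLoop c) := by
  unfold fifthRootAlongLoop
  have hbase : Continuous fun t : ℝ => (c : ℂ) ^ 8 + (c : ℂ) ^ 15 * exp (-(14 * π * I * t)) := by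
    fun_prop
  exact (by fun_prop : Continuous fun t : ℝ => exp ((1 + 14 * t) * π * I / 5)).mul <|
    hbase.cpow continuous_const fun t => Or.inl (re_pow_eight_add_pow_fifteen_mul_exp_pos hc₀ hc₁ t)

theorem fifthRootAlongLoop_ne_zero (t : ℝ) : fifthRootAlongLoop c t ≠ 0 := by
  refine mul_ne_zero (exp_ne_zero _) (cpow_ne_zero_iff.mpr (Or.inl fun h => ?_))
  simpa [h] using re_pow_eight_add_pow_fifteen_mul_exp_pos hc₀ hc₁ t

theorem eq_fifthRootAlongLoop_of_pow_five_eq {p : ℂ} {t : ℝ}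
    (hp : p ^ 5 = -((c : ℂ) ^ 15 + (c : ℂ) ^ 8 * exp (14 * π * I * t))) :
    ∃ k : ℕ, p = fifthRootAlongLoop c (t + k) := by
  have hx₀ := fifthRootAlongLoop_ne_zero hc₀ hc₁ t
  have hunit : (p / fifthRootAlongLoop c t) ^ 5 = 1 := by
    rw [div_pow, hp, ← fifthRootAlongLoop_pow_five, div_self (pow_ne_zero _ hx₀)]
  obtain ⟨k, -, hk⟩ := isPrimitiveRoot_exp_fourteen_pi_div_five.eq_pow_of_pow_eq_one hunit
  exact ⟨k, by rw [fifthRootAlongLoop_add_nat, hk, div_mul_cancel₀ _ hx₀]⟩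

theorem continuous_fifth_root_not_closed {x : ℝ → ℂ} (hx : ContinuousOn x (Icc 0 1))
    (hx5 : ∀ t ∈ Icc (0 : ℝ) 1, x t ^ 5 = -((c : ℂ) ^ 15 + (c : ℂ) ^ 8 * exp (14 * π * I * t))) :
    x 1 ≠ x 0 := by
  intro hclosed
  have h0 : (0 : ℝ) ∈ Icc 0 1 := ⟨le_rfl, zero_le_one⟩
  have h1 : (1 : ℝ) ∈ Icc 0 1 := ⟨zero_le_one, le_rfl⟩
  have hpow : ∀ t ∈ Icc (0 : ℝ) 1, x t ^ 5 = fifthRootAlongLoop c t ^ 5 := fun t ht => by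
    rw [hx5 t ht, fifthRootAlongLoop_pow_five]
  have hx₀ := fifthRootAlongLoop_ne_zero hc₀ hc₁
  have hratio : x 0 / fifthRootAlongLoop c 0 / exp (2 * π * I * (7 / 5)) =
      x 0 / fifthRootAlongLoop c 0 := by
    have h := isPreconnected_Icc.div_eq_div_of_pow_eq_pow hx
      (continuous_fifthRootAlongLoop hc₀ hc₁).continuousOn (fun t _ => hx₀ t) (by norm_num)
      hpow h1 h0
    have hmonodromy := fifthRootAlongLoop_add_one c 0
    rw [zero_add] at hmonodromy
    rwa [hmonodromy, hclosed, mul_comm, ← div_div] at h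
  have hx0 : x 0 ≠ 0 := by
    intro h
    have := hpow 0 h0
    rw [h, zero_pow (by norm_num)] at this
    exact hx₀ 0 (pow_eq_zero_iff (by norm_num) |>.mp this.symm)
  rw [div_eq_iff (exp_ne_zero _), eq_comm, mul_eq_left₀ (div_ne_zero hx0 (hx₀ 0))] at hratio
  exact isPrimitiveRoot_exp_fourteen_pi_div_five.ne_one (by norm_num) hratio

theorem lift_of_loop_not_closed {g : ℝ → ℂ × ℂ × ℂ} (hg : ContinuousOn g (Icc 0 1))
    (hgX : ∀ t ∈ Icc (0 : ℝ) 1,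
      (g t).1 ^ 5 + (g t).2.2 ^ 15 + (g t).2.1 ^ 7 * (g t).2.2 = 0 ∧
      (g t).2.1 = (c : ℂ) * exp (2 * π * I * t) ∧ (g t).2.2 = (c : ℂ)) :
    g 1 ≠ g 0 := fun hclosed =>
  continuous_fifth_root_not_closed hc₀ hc₁ (continuous_fst.comp_continuousOn hg)
    (fun t ht => show (g t).1 ^ 5 = _ by
      obtain ⟨hX, hy, hz⟩ := hgX t ht
      rw [hy, hz] at hX
      linear_combination hX - mul_exp_two_pi_mul_I_pow_seven_mul (c : ℂ) t)
    (congrArg Prod.fst hclosed)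

theorem surface_over_loop_eq_range : {p : ℂ × ℂ × ℂ |
      p.1 ^ 5 + p.2.2 ^ 15 + p.2.1 ^ 7 * p.2.2 = 0 ∧
      (∃ t ∈ Icc (0 : ℝ) 1, p.2.1 = (c : ℂ) * exp (2 * π * I * t)) ∧ p.2.2 = (c : ℂ)} =
    range fun t : ℝ => (fifthRootAlongLoop c t, (c : ℂ) * exp (2 * π * I * t), (c : ℂ)) := by
  ext ⟨x, y, z⟩
  simp only [mem_ofPred_eq, mem_range, Prod.mk.injEq]
  constructor
  · rintro ⟨hX, ⟨t, -, rfl⟩, rfl⟩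
    obtain ⟨k, rfl⟩ := eq_fifthRootAlongLoop_of_pow_five_eq hc₀ hc₁ (p := x) (t := t)
      (by linear_combination hX - mul_exp_two_pi_mul_I_pow_seven_mul (c : ℂ) t)
    refine ⟨t + k, rfl, congrArg _ ?_, rfl⟩
    simpa using periodic_exp_two_pi_mul_I_mul.nat_mul k t
  · rintro ⟨t, rfl, rfl, rfl⟩
    refine ⟨?_, ⟨Int.fract t, ⟨Int.fract_nonneg t, (Int.fract_lt_one t).le⟩, ?_⟩, rfl⟩
    · rw [fifthRootAlongLoop_pow_five, mul_exp_two_pi_mul_I_pow_seven_mul]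
      ring
    · congr 1
      simpa using (periodic_exp_two_pi_mul_I_mul.sub_int_mul_eq (x := t) ⌊t⌋).symm

theorem isConnected_surface_over_loop :
    IsConnected {p : ℂ × ℂ × ℂ |
      p.1 ^ 5 + p.2.2 ^ 15 + p.2.1 ^ 7 * p.2.2 = 0 ∧
      (∃ t ∈ Icc (0 : ℝ) 1, p.2.1 = (c : ℂ) * exp (2 * π * I * t)) ∧ p.2.2 = (c : ℂ)} := by
  rw [surface_over_loop_eq_range hc₀ hc₁]
  have := continuous_fifthRootAlongLoop hc₀ hc₁
  exact isConnected_range (by fun_prop)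

end SmallRadius

/-- For small c > 0 and the loop γ(t) = (c·e^{2πit}, c) in ℂ²: any continuous
branch x(t) of (−(c¹⁵ + c⁸e^{14πit}))^{1/5} along γ satisfies x(1) ≠ x(0); hence no
continuous lift of γ to the 5-fold covering X = {x⁵ + z¹⁵ + y⁷z = 0} → ℂ² is a closed loop,
and the part of the covering over the loop is connected. -/
theorem stmt3 :
    ∃ c₀ : ℝ, 0 < c₀ ∧ ∀ c : ℝ, 0 < c → c < c₀ →
      -- a continuous branch of the fifth root along the loop is not closed
      ((∀ x : ℝ → ℂ, ContinuousOn x (Icc 0 1) →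
        (∀ t ∈ Icc (0:ℝ) 1,
          x t ^ 5 = -((c:ℂ) ^ 15 + (c:ℂ) ^ 8 * Complex.exp (14 * Real.pi * I * t))) →
        x 1 ≠ x 0) ∧
      -- hence no continuous lift of γ to X is a closed loop
      (∀ g : ℝ → ℂ × ℂ × ℂ, ContinuousOn g (Icc 0 1) →
        (∀ t ∈ Icc (0:ℝ) 1,
          (g t).1 ^ 5 + (g t).2.2 ^ 15 + (g t).2.1 ^ 7 * (g t).2.2 = 0 ∧
          (g t).2.1 = (c:ℂ) * Complex.exp (2 * Real.pi * I * t) ∧ (g t).2.2 = (c:ℂ)) →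
        g 1 ≠ g 0) ∧
      -- consequently the covering restricted over the loop is connected
      IsConnected {p : ℂ × ℂ × ℂ |
        p.1 ^ 5 + p.2.2 ^ 15 + p.2.1 ^ 7 * p.2.2 = 0 ∧
        (∃ t ∈ Icc (0:ℝ) 1, p.2.1 = (c:ℂ) * Complex.exp (2 * Real.pi * I * t)) ∧
        p.2.2 = (c:ℂ)}) :=
  ⟨1, one_pos, fun _ hc₀ hc₁ =>
    ⟨fun _ hx hx5 => continuous_fifth_root_not_closed hc₀ hc₁ hx hx5,
      fun _ hg hgX => lift_of_loop_not_closed hc₀ hc₁ hg hgX,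
      isConnected_surface_over_loop hc₀ hc₁⟩⟩
end

section
/- Let A ⊆ ℂ³ be invariant under the weighted ℂ*-action with equal weights w₁ = w₂ > w₃ > 0, and suppose A contains a punctured neighborhood in X of a smooth point (x₀,y₀,0) of an algebraic curve Γ ⊆ {z=0}, such that through (x₀,y₀,0) there pass arcs γ(t) = (γ₁(t), γ₂(t), t^m γ₃(t)) in A with γ₃(0) = v for every v ∈ ℂ. Then the tangent cone T₀A contains the 4-real-dimensional set {(x,y,v) : (x,y,0) ∈ Γ̄, v ∈ ℂ}, where Γ̄ is the cone over Γ (the line through (x₀,y₀)). -/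
open Set Filter Topology

noncomputable section

def seqTangentConeAtZero {E : Type*} [NormedAddCommGroup E] [NormedSpace ℝ E]
    (A : Set E) : Set E :=
  {v | ∃ (a : ℕ → E) (t : ℕ → ℝ), (∀ n, a n ∈ A) ∧ Tendsto a atTop (nhds 0) ∧
    (∀ n, 0 < t n) ∧ Tendsto t atTop (nhds 0) ∧
    Tendsto (fun n => (t n)⁻¹ • a n) atTop (nhds v)}

/-! The arcs through `(x₀, y₀, 0)` are pushed towards the origin by the weighted action
`s ↦ (s^w₁ x, s^w₁ y, s^w₃ z)` at a speed `s = σ rᵏ` coupled to the arc parameter `t = rʲ`.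
Dividing by `r^(k w₃ + j m)` normalises the third coordinate to `σ^w₃ γ₃(t) → σ^w₃ v`,
while the first two become `σ^w₁ rᵈ γᵢ(t)` with `d = k (w₁ - w₃) - j m`. With `d = 0` and
`σ^w₁ = c` this gives `(c x₀, c y₀, v)`; with `d > 0` it gives `(0, 0, v)`. -/

theorem mem_seqTangentConeAtZero_of_tendsto {E ι : Type*} [NormedAddCommGroup E]
    [NormedSpace ℝ E] {A : Set E} {l : Filter ι} [l.NeBot] [l.IsCountablyGenerated]
    {f : ι → E} {τ : ι → ℝ} {v : E} (hfA : ∀ᶠ i in l, f i ∈ A) (hτpos : ∀ᶠ i in l, 0 < τ i)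
    (hτ : Tendsto τ l (𝓝 0)) (hv : Tendsto (fun i => (τ i)⁻¹ • f i) l (𝓝 v)) :
    v ∈ seqTangentConeAtZero A := by
  have hf : Tendsto f l (𝓝 0) := by
    have hlim := hτ.smul hv
    rw [zero_smul] at hlim
    refine hlim.congr' ?_
    filter_upwards [hτpos] with i hi using smul_inv_smul₀ hi.ne' (f i)
  obtain ⟨u, hu, hmem⟩ := exists_seq_forall_of_frequently (hfA.and hτpos).frequently
  exact ⟨f ∘ u, τ ∘ u, fun n => (hmem n).1, hf.comp hu, fun n => (hmem n).2, hτ.comp hu,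
    hv.comp hu⟩

theorem tendsto_pow_nhdsGT_zero {j : ℕ} (hj : 0 < j) :
    Tendsto (fun r : ℝ => r ^ j) (𝓝[>] 0) (𝓝[>] 0) := by
  refine tendsto_nhdsWithin_of_tendsto_nhds_of_eventually_within _ ?_ ?_
  · simpa [zero_pow hj.ne'] using
      ((continuous_pow j).tendsto (0 : ℝ)).mono_left nhdsWithin_le_nhds
  · filter_upwards [self_mem_nhdsWithin] with r (hr : 0 < r) using pow_pos hr j

theorem ContinuousOn.tendsto_nhdsGT_of_Ico {E : Type*} [TopologicalSpace E] {γ : ℝ → E}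
    {a b : ℝ} (hab : a < b) (hγ : ContinuousOn γ (Ico a b)) :
    Tendsto γ (𝓝[>] a) (𝓝 (γ a)) :=
  (continuousWithinAt_Ioo_iff_Ioi hab).1 ((hγ a ⟨le_rfl, hab⟩).mono Ioo_subset_Ico_self)

section WeightedScaling

variable {w₁ w₃ m : ℕ} {A : Set (ℂ × ℂ × ℂ)}

theorem inv_pow_smul_weighted_arc_eq {σ : ℂ} {r : ℝ} (hr : r ≠ 0) {k j d : ℕ}
    (hkd : k * w₁ = k * w₃ + j * m + d) (x y z : ℂ) :
    (r ^ (k * w₃ + j * m))⁻¹ • ((σ * (r : ℂ) ^ k) ^ w₁ * x, (σ * (r : ℂ) ^ k) ^ w₁ * y,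
      (σ * (r : ℂ) ^ k) ^ w₃ * (((r ^ j : ℝ) : ℂ) ^ m * z)) =
      (σ ^ w₁ * (r : ℂ) ^ d * x, σ ^ w₁ * (r : ℂ) ^ d * y, σ ^ w₃ * z) := by
  have hr' : (r : ℂ) ≠ 0 := Complex.ofReal_ne_zero.2 hr
  have h₁ : ((r : ℂ) ^ k) ^ w₁ = (r : ℂ) ^ (k * w₃ + j * m) * (r : ℂ) ^ d := by
    rw [← pow_mul, hkd, pow_add]
  have h₃ : ((r : ℂ) ^ k) ^ w₃ * ((r : ℂ) ^ j) ^ m = (r : ℂ) ^ (k * w₃ + j * m) := by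
    rw [← pow_mul, ← pow_mul, pow_add]
  simp only [Prod.smul_mk, Complex.real_smul, Complex.ofReal_inv, Complex.ofReal_pow, mul_pow]
  refine Prod.ext ?_ (Prod.ext ?_ ?_) <;> dsimp only
  · rw [h₁]; field_simp
  · rw [h₁]; field_simp
  · rw [← h₃]; field_simp

theorem weighted_rescaled_arc_mem_seqTangentConeAtZero
    (hInv : ∀ s : ℂ, s ≠ 0 → ∀ p ∈ A, (s ^ w₁ * p.1, s ^ w₁ * p.2.1, s ^ w₃ * p.2.2) ∈ A)
    (hm : 0 < m) {γ₁ γ₂ γ₃ : ℝ → ℂ} {x y v : ℂ}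
    (hγ₁ : Tendsto γ₁ (𝓝[>] 0) (𝓝 x)) (hγ₂ : Tendsto γ₂ (𝓝[>] 0) (𝓝 y))
    (hγ₃ : Tendsto γ₃ (𝓝[>] 0) (𝓝 v))
    (hγA : ∀ᶠ t in 𝓝[>] 0, (γ₁ t, γ₂ t, (t : ℂ) ^ m * γ₃ t) ∈ A)
    {σ : ℂ} (hσ : σ ≠ 0) {k j d : ℕ} (hj : 0 < j) (hkd : k * w₁ = k * w₃ + j * m + d) :
    (σ ^ w₁ * 0 ^ d * x, σ ^ w₁ * 0 ^ d * y, σ ^ w₃ * v) ∈ seqTangentConeAtZero A := by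
  have ht := tendsto_pow_nhdsGT_zero hj
  have hN : 0 < k * w₃ + j * m := by positivity
  refine mem_seqTangentConeAtZero_of_tendsto (l := 𝓝[>] (0 : ℝ))
    (τ := fun r => r ^ (k * w₃ + j * m))
    (f := fun r => ((σ * (r : ℂ) ^ k) ^ w₁ * γ₁ (r ^ j), (σ * (r : ℂ) ^ k) ^ w₁ * γ₂ (r ^ j),
      (σ * (r : ℂ) ^ k) ^ w₃ * (((r ^ j : ℝ) : ℂ) ^ m * γ₃ (r ^ j)))) ?_ ?_ ?_ ?_
  · filter_upwards [ht.eventually hγA, self_mem_nhdsWithin] with r hr (hr0 : 0 < r)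
    exact hInv _ (mul_ne_zero hσ (pow_ne_zero _ (Complex.ofReal_ne_zero.2 hr0.ne'))) _ hr
  · filter_upwards [self_mem_nhdsWithin] with r (hr0 : 0 < r) using pow_pos hr0 _
  · exact tendsto_nhds_of_tendsto_nhdsWithin (tendsto_pow_nhdsGT_zero hN)
  · have hrd : Tendsto (fun r : ℝ => (r : ℂ) ^ d) (𝓝[>] 0) (𝓝 (0 ^ d)) := by
      simpa using ((by fun_prop : Continuous fun r : ℝ => (r : ℂ) ^ d).tendsto 0).mono_left
        nhdsWithin_le_nhds
    have hlim := ((hrd.const_mul (σ ^ w₁)).mul (hγ₁.comp ht)).prodMk_nhds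
      (((hrd.const_mul (σ ^ w₁)).mul (hγ₂.comp ht)).prodMk_nhds ((hγ₃.comp ht).const_mul (σ ^ w₃)))
    refine hlim.congr' ?_
    filter_upwards [self_mem_nhdsWithin] with r (hr0 : 0 < r)
    exact (inv_pow_smul_weighted_arc_eq hr0.ne' hkd _ _ _).symm

end WeightedScaling

theorem stmt5_general (w₁ w₃ : ℕ) (hw : w₃ < w₁)
    (A : Set (ℂ × ℂ × ℂ))
    (hInv : ∀ s : ℂ, s ≠ 0 → ∀ p ∈ A, (s ^ w₁ * p.1, s ^ w₁ * p.2.1, s ^ w₃ * p.2.2) ∈ A)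
    (x₀ y₀ : ℂ) (m : ℕ) (hm : 0 < m)
    (harc : ∀ v : ℂ, ∃ (ε : ℝ) (γ₁ γ₂ γ₃ : ℝ → ℂ), 0 < ε ∧
      ContinuousOn γ₁ (Ico 0 ε) ∧ ContinuousOn γ₂ (Ico 0 ε) ∧ ContinuousOn γ₃ (Ico 0 ε) ∧
      γ₁ 0 = x₀ ∧ γ₂ 0 = y₀ ∧ γ₃ 0 = v ∧
      ∀ t ∈ Ioo (0:ℝ) ε, (γ₁ t, γ₂ t, ((t:ℂ) ^ m) * γ₃ t) ∈ A) :
    {p : ℂ × ℂ × ℂ | ∃ c v : ℂ, p = (c * x₀, c * y₀, v)} ⊆ seqTangentConeAtZero A := by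
  rintro _ ⟨c, v, rfl⟩
  obtain ⟨e, rfl⟩ := Nat.exists_eq_add_of_lt hw
  have hcone : ∀ v σ, σ ≠ 0 → ∀ k d, k * (w₃ + e + 1) = k * w₃ + (e + 1) * m + d →
      (σ ^ (w₃ + e + 1) * 0 ^ d * x₀, σ ^ (w₃ + e + 1) * 0 ^ d * y₀, σ ^ w₃ * v) ∈
        seqTangentConeAtZero A := by
    intro v σ hσ k d hkd
    obtain ⟨ε, γ₁, γ₂, γ₃, hε, hc₁, hc₂, hc₃, rfl, rfl, rfl, hγA⟩ := harc v
    exact weighted_rescaled_arc_mem_seqTangentConeAtZero hInv hm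
      (hc₁.tendsto_nhdsGT_of_Ico hε) (hc₂.tendsto_nhdsGT_of_Ico hε)
      (hc₃.tendsto_nhdsGT_of_Ico hε) (mem_of_superset (Ioo_mem_nhdsGT hε) hγA) hσ
      e.succ_pos hkd
  rcases eq_or_ne c 0 with rfl | hc
  · simpa using hcone v 1 one_ne_zero (m + 1) (e + 1) (by ring)
  · obtain ⟨σ, rfl⟩ := IsAlgClosed.exists_pow_nat_eq c (w₃ + e).succ_pos
    have hσ : σ ≠ 0 := by rintro rfl; simp at hc
    simpa [mul_div_cancel₀ v (pow_ne_zero w₃ hσ)] using hcone (v / σ ^ w₃) σ hσ m 0 (by ring)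

/-- Let A ⊆ ℂ³ be invariant under the weighted ℂ*-action with equal weights
w₁ = w₂ > w₃ > 0, and suppose that through a smooth point (x₀,y₀,0) ≠ 0 of a curve in
{z = 0} there pass, for every v ∈ ℂ, arcs γ(t) = (γ₁(t), γ₂(t), t^m γ₃(t)) in A with
γ₁(0) = x₀, γ₂(0) = y₀, γ₃(0) = v.  Then the tangent cone T₀A contains the
4-real-dimensional set {(x,y,v) : (x,y) ∈ ℂ·(x₀,y₀), v ∈ ℂ} (the cone over the line
through (x₀,y₀) times ℂ). -/
theorem stmt5 (w₁ w₃ : ℕ) (hw : w₃ < w₁) (hw₃ : 0 < w₃)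
    (A : Set (ℂ × ℂ × ℂ))
    (hInv : ∀ s : ℂ, s ≠ 0 → ∀ p ∈ A, (s ^ w₁ * p.1, s ^ w₁ * p.2.1, s ^ w₃ * p.2.2) ∈ A)
    (x₀ y₀ : ℂ) (hpt : (x₀, y₀) ≠ (0, 0)) (m : ℕ) (hm : 0 < m)
    (harc : ∀ v : ℂ, ∃ (ε : ℝ) (γ₁ γ₂ γ₃ : ℝ → ℂ), 0 < ε ∧
      ContinuousOn γ₁ (Ico 0 ε) ∧ ContinuousOn γ₂ (Ico 0 ε) ∧ ContinuousOn γ₃ (Ico 0 ε) ∧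
      γ₁ 0 = x₀ ∧ γ₂ 0 = y₀ ∧ γ₃ 0 = v ∧
      ∀ t ∈ Ioo (0:ℝ) ε, (γ₁ t, γ₂ t, ((t:ℂ) ^ m) * γ₃ t) ∈ A) :
    {p : ℂ × ℂ × ℂ | ∃ c v : ℂ, p = (c * x₀, c * y₀, v)} ⊆ seqTangentConeAtZero A :=
  stmt5_general w₁ w₃ hw A hInv x₀ y₀ m hm harc

end
end

section
/- Let X' be a compact connected Lipschitz (n+1)-manifold with boundary, covered by finitely many subsets T₁,…,T_m each bi-Lipschitz homeomorphic to a closed (n+1)-ball, such that any two sets T_i, T_j with nonempty intersection satisfy H^{n+1}(T_i ∩ T_j) > 0. Suppose for each i and each ξ' > 0 there is ε_i > 0 such that any n-rectifiable Y ⊆ T_i with H^n(Y) < ε_i leaves a component of T_i \ Y of measure > H^{n+1}(T_i) − ξ'. Then for every ξ > 0 there exists ε > 0 such that for every n-dimensional rectifiable subset Y' ⊆ X' with H^n(Y') < ε, the complement X' \ Y' has a connected component A with H^{n+1}(A) > H^{n+1}(X') − ξ/2. -/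
/-!
Apply the isoperimetric property of each ball `T i` to `Y' ∩ T i` with a tolerance `ξ'` so small
that `2ξ'` lies below every positive overlap `H^{n+1}(T i ∩ T j)` and `m ξ'` below `ξ / 2`. The
large component `A i` of `T i \ Y'` then misses less than `ξ'` of `T i`, so the components of two
overlapping balls meet. Since `X'` is connected, the overlap graph of the closed cover is
connected, hence all the `A i` lie in one component of `X' \ Y'`, which misses at most `m ξ'` of
`X'`. Having finite `H^n` measure, `Y'` is `H^{n+1}`-null, so each `A i` is measurable up to a
null set.
-/

open MeasureTheory Metric Filter Set Topology
open scoped ENNReal NNReal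

noncomputable section

variable {E : Type*} [MetricSpace E] [MeasurableSpace E] [BorelSpace E]

/-- A set is `k`-rectifiable if up to an `H^k`-null set it is covered by countably many
Lipschitz images of `ℝ^k`. -/
def IsRectifiableSet (k : ℕ) (Y : Set E) : Prop :=
  ∃ (f : ℕ → EuclideanSpace ℝ (Fin k) → E) (N : Set E),
    (∀ i, ∃ C : ℝ≥0, LipschitzWith C (f i)) ∧ μH[(k : ℝ)] N = 0 ∧
      Y ⊆ N ∪ ⋃ i, Set.range (f i)

/-- Inferior `k`-density of `W` at `x` (up to the normalizing constant η). -/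
def infDensity (k : ℝ) (W : Set E) (x : E) : ℝ≥0∞ :=
  Filter.liminf (fun r : ℝ => μH[k] (W ∩ closedBall x r) / ENNReal.ofReal (r ^ k)) (𝓝[>] 0)

/-- Superior `k`-density of `W` at `x` (up to the normalizing constant η). -/
def supDensity (k : ℝ) (W : Set E) (x : E) : ℝ≥0∞ :=
  Filter.limsup (fun r : ℝ => μH[k] (W ∩ closedBall x r) / ENNReal.ofReal (r ^ k)) (𝓝[>] 0)

/-- `Y` is a separating set of the `k`-dimensional set `X` at `x₀`: it is
`(k-1)`-rectifiable, contains `x₀`, has zero superior `(k-1)`-density at `x₀`, and for some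
small ε it separates `X ∩ εB(x₀)` into (at least) two connected components of nonzero
inferior `k`-density at `x₀`. -/
def IsSeparatingSet (k : ℕ) (X : Set E) (x₀ : E) (Y : Set E) : Prop :=
  x₀ ∈ Y ∧ Y ⊆ X ∧ IsRectifiableSet (k - 1) Y ∧
    supDensity ((k : ℝ) - 1) Y x₀ = 0 ∧
    ∃ ε : ℝ, 0 < ε ∧ ∃ a b : E,
      a ∈ (X ∩ closedBall x₀ ε) \ Y ∧ b ∈ (X ∩ closedBall x₀ ε) \ Y ∧
      connectedComponentIn ((X ∩ closedBall x₀ ε) \ Y) a ≠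
        connectedComponentIn ((X ∩ closedBall x₀ ε) \ Y) b ∧
      infDensity k (connectedComponentIn ((X ∩ closedBall x₀ ε) \ Y) a) x₀ ≠ 0 ∧
      infDensity k (connectedComponentIn ((X ∩ closedBall x₀ ε) \ Y) b) x₀ ≠ 0

/-- `X` has a separating set at `x₀`. -/
def HasSeparatingSet (k : ℕ) (X : Set E) (x₀ : E) : Prop :=
  ∃ Y : Set E, IsSeparatingSet k X x₀ Y

noncomputable section

/-- `M` is an `n`-dimensional Lipschitz manifold (possibly with boundary): every point has a
neighborhood in `M` which is a bi-Lipschitz image of a relatively open subset of the closed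
half-space of `ℝⁿ`. -/
def IsLipschitzManifoldWithBoundary (n : ℕ) {E : Type*} [MetricSpace E] (M : Set E) : Prop :=
  ∀ x ∈ M, ∃ (f : EuclideanSpace ℝ (Fin n) → E) (V : Set (EuclideanSpace ℝ (Fin n))) (K : ℝ),
    1 ≤ K ∧
    (∃ O : Set (EuclideanSpace ℝ (Fin n)), IsOpen O ∧
      V = O ∩ {v | ∀ j : Fin n, (j : ℕ) = 0 → 0 ≤ v j}) ∧
    x ∈ f '' V ∧ (∃ ρ : ℝ, 0 < ρ ∧ M ∩ ball x ρ ⊆ f '' V) ∧ f '' V ⊆ M ∧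
    ∀ a ∈ V, ∀ b ∈ V, dist a b ≤ K * dist (f a) (f b) ∧ dist (f a) (f b) ≤ K * dist a b

/-- `T` is a bi-Lipschitz image of the closed unit ball of `ℝⁿ`. -/
def IsBiLipschitzBall (n : ℕ) {E : Type*} [MetricSpace E] (T : Set E) : Prop :=
  ∃ (f : EuclideanSpace ℝ (Fin n) → E) (K : ℝ), 1 ≤ K ∧
    T = f '' closedBall 0 1 ∧
    ∀ a ∈ closedBall (0 : EuclideanSpace ℝ (Fin n)) 1, ∀ b ∈ closedBall (0 : EuclideanSpace ℝ (Fin n)) 1,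
      dist a b ≤ K * dist (f a) (f b) ∧ dist (f a) (f b) ≤ K * dist a b

theorem IsRectifiableSet.mono {k : ℕ} {Y Y' : Set E} (h : IsRectifiableSet k Y') (hY : Y ⊆ Y') :
    IsRectifiableSet k Y := by
  obtain ⟨f, N, hf, hN, hcover⟩ := h
  exact ⟨f, N, hf, hN, hY.trans hcover⟩

section BiLipschitzBall

variable {α : Type*} [MetricSpace α] {n : ℕ} {T : Set α}

theorem IsBiLipschitzBall.exists_lipschitzOnWith (h : IsBiLipschitzBall n T) :
    ∃ (f : EuclideanSpace ℝ (Fin n) → α) (K : ℝ≥0),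
      T = f '' closedBall 0 1 ∧ LipschitzOnWith K f (closedBall 0 1) := by
  obtain ⟨f, K, hK, rfl, hbi⟩ := h
  refine ⟨f, K.toNNReal, rfl, LipschitzOnWith.of_dist_le_mul fun x hx y hy => ?_⟩
  rw [Real.coe_toNNReal K (by linarith)]
  exact (hbi x hx y hy).2

theorem IsBiLipschitzBall.isCompact (h : IsBiLipschitzBall n T) : IsCompact T := by
  obtain ⟨f, K, rfl, hf⟩ := h.exists_lipschitzOnWith
  exact (isCompact_closedBall _ _).image_of_continuousOn hf.continuousOn

theorem IsBiLipschitzBall.hausdorffMeasure_ne_top [MeasurableSpace α] [BorelSpace α]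
    (h : IsBiLipschitzBall n T) : μH[(n : ℝ)] T ≠ ∞ := by
  obtain ⟨f, K, rfl, hf⟩ := h.exists_lipschitzOnWith
  refine ((hf.hausdorffMeasure_image_le n.cast_nonneg).trans_lt ?_).ne
  exact ENNReal.mul_lt_top (ENNReal.rpow_lt_top_of_nonneg n.cast_nonneg ENNReal.coe_ne_top)
    (isCompact_closedBall _ _).measure_lt_top

end BiLipschitzBall

section Components

variable {α : Type*} [TopologicalSpace α]

theorem connectedComponentIn_eq_closure_inter (F : Set α) (x : α) :
    connectedComponentIn F x = closure (connectedComponentIn F x) ∩ F := by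
  by_cases hx : x ∈ F
  · refine subset_antisymm (subset_inter subset_closure (connectedComponentIn_subset F x)) ?_
    refine IsPreconnected.subset_connectedComponentIn ?_ ?_ inter_subset_right
    · exact isPreconnected_connectedComponentIn.subset_closure
        (subset_inter subset_closure (connectedComponentIn_subset F x)) inter_subset_left
    · exact ⟨subset_closure (mem_connectedComponentIn hx), hx⟩
  · simp [connectedComponentIn_eq_empty hx]

theorem reflTransGen_inter_nonempty_of_isPreconnected_iUnion {ι : Type*} [Finite ι]
    {T : ι → Set α} (hT : IsPreconnected (⋃ i, T i)) (hTc : ∀ i, IsClosed (T i))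
    (hTne : ∀ i, (T i).Nonempty) (i j : ι) :
    Relation.ReflTransGen (fun i j => (T i ∩ T j).Nonempty) i j := by
  set I := {j | Relation.ReflTransGen (fun i j => (T i ∩ T j).Nonempty) i j}
  have hI : ∀ k ∈ I, ∀ l, (T k ∩ T l).Nonempty → l ∈ I := fun k hk l hkl => hk.tail hkl
  have hclosed (J : Set ι) : IsClosed (⋃ k ∈ J, T k) :=
    J.toFinite.isClosed_biUnion fun k _ => hTc k
  have hcover : ⋃ k, T k ⊆ (⋃ k ∈ I, T k) ∪ ⋃ k ∈ Iᶜ, T k := by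
    refine iUnion_subset fun k => ?_
    by_cases hk : k ∈ I
    · exact (subset_biUnion_of_mem hk).trans subset_union_left
    · exact (subset_biUnion_of_mem (u := T) (show k ∈ Iᶜ from hk)).trans subset_union_right
  have hdisj : (⋃ k, T k) ∩ ((⋃ k ∈ I, T k) ∩ ⋃ k ∈ Iᶜ, T k) = ∅ := by
    refine eq_empty_of_forall_notMem fun x hx => ?_
    obtain ⟨-, hxI, hxJ⟩ := hx
    obtain ⟨k, hk, hxk⟩ := mem_iUnion₂.1 hxI
    obtain ⟨l, hl, hxl⟩ := mem_iUnion₂.1 hxJ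
    exact hl (hI k hk l ⟨x, hxk, hxl⟩)
  rcases isPreconnected_iff_subset_of_disjoint_closed.1 hT _ _ (hclosed I) (hclosed Iᶜ)
    hcover hdisj with h | h
  · obtain ⟨x, hx⟩ := hTne j
    obtain ⟨k, hk, hxk⟩ := mem_iUnion₂.1 (h (mem_iUnion_of_mem j hx))
    exact hI k hk j ⟨x, hxk, hx⟩
  · obtain ⟨x, hx⟩ := hTne i
    obtain ⟨k, hk, hxk⟩ := mem_iUnion₂.1 (h (mem_iUnion_of_mem i hx))
    exact (hk (hI i .refl k ⟨x, hx, hxk⟩)).elim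

end Components

section Measure

variable {α : Type*} [MeasurableSpace α] {μ : Measure α}

theorem nullMeasurableSet_connectedComponentIn_diff [TopologicalSpace α] [OpensMeasurableSpace α]
    {s Y : Set α} (hs : IsClosed s) (hY : μ Y = 0) (x : α) :
    NullMeasurableSet (connectedComponentIn (s \ Y) x) μ := by
  rw [connectedComponentIn_eq_closure_inter, ← inter_sdiff_assoc]
  exact (isClosed_closure.measurableSet.inter hs.measurableSet).nullMeasurableSet.diff
    (.of_null hY)

theorem measure_diff_lt_of_tsub_lt {A T : Set α} {η : ℝ≥0∞} (hAT : A ⊆ T)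
    (hA : NullMeasurableSet A μ) (hT : μ T ≠ ∞) (h : μ T - η < μ A) : μ (T \ A) < η := by
  rw [measure_sdiff hAT hA (ne_top_of_le_ne_top hT (measure_mono hAT))]
  exact ENNReal.sub_lt_of_lt_add (measure_mono hAT)
    (add_comm (μ A) η ▸ ENNReal.lt_add_of_sub_lt_right (.inl hT) h)

theorem nonempty_inter_of_measure_diff_add_lt {S S' A A' : Set α}
    (h : μ (S \ A) + μ (S' \ A') < μ (S ∩ S')) : (A ∩ A').Nonempty := by
  by_contra hAA'
  have hcover : S ∩ S' ⊆ (S \ A) ∪ (S' \ A') := by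
    rintro x ⟨hxS, hxS'⟩
    by_cases hxA : x ∈ A
    · exact .inr ⟨hxS', fun hxA' => hAA' ⟨x, hxA, hxA'⟩⟩
    · exact .inl ⟨hxS, hxA⟩
  exact h.not_ge ((measure_mono hcover).trans (measure_union_le _ _))

end Measure

theorem ENNReal.sub_lt_of_le_add_of_lt {a b s t : ℝ≥0∞} (hab : a ≤ b + s) (hst : s < t)
    (hb : 0 < b) (hb' : b ≠ ∞) : a - t < b := by
  rcases le_or_gt t a with hta | hat
  · exact ENNReal.sub_lt_of_lt_add hta (hab.trans_lt (ENNReal.add_lt_add_left hb' hst))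
  · rwa [tsub_eq_zero_of_le hat.le]

theorem eventually_mul_ofReal_lt {c u : ℝ≥0∞} (hc : c ≠ ∞) (hu : 0 < u) :
    ∀ᶠ r in 𝓝 (0 : ℝ), c * ENNReal.ofReal r < u := by
  have : Tendsto (fun r : ℝ => c * ENNReal.ofReal r) (𝓝 0) (𝓝 0) := by
    simpa using ENNReal.Tendsto.const_mul (ENNReal.continuous_ofReal.tendsto 0) (.inr hc)
  exact this.eventually_lt_const hu

theorem exists_connectedComponentIn_diff_measure_gt {α ι : Type*} [TopologicalSpace α]
    [MeasurableSpace α] [OpensMeasurableSpace α] [Fintype ι] {μ : Measure α} {X Y : Set α}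
    {T : ι → Set α} {η t : ℝ≥0∞} (hX : IsConnected X) (hXT : X = ⋃ i, T i)
    (hTc : ∀ i, IsClosed (T i)) (hTfin : ∀ i, μ (T i) ≠ ∞) (hY : μ Y = 0)
    (hpair : ∀ i j, (T i ∩ T j).Nonempty → 2 * η ≤ μ (T i ∩ T j))
    (hsum : Fintype.card ι * η < t) (a : ι → α) (ha : ∀ i, a i ∈ T i \ Y)
    (hA : ∀ i, μ (T i) - η < μ (connectedComponentIn (T i \ Y) (a i))) :
    ∃ x ∈ X \ Y, μ X - t < μ (connectedComponentIn (X \ Y) x) := by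
  set A := fun i => connectedComponentIn (T i \ Y) (a i)
  have hAT i : A i ⊆ T i := (connectedComponentIn_subset _ _).trans sdiff_subset
  have hAX i : A i ⊆ X \ Y :=
    (connectedComponentIn_subset _ _).trans (sdiff_subset_sdiff_left (hXT ▸ subset_iUnion T i))
  have hdefect i : μ (T i \ A i) < η := measure_diff_lt_of_tsub_lt (hAT i)
    (nullMeasurableSet_connectedComponentIn_diff (hTc i) hY _) (hTfin i) (hA i)
  have hmeet i j (hij : (T i ∩ T j).Nonempty) : (A i ∩ A j).Nonempty :=
    nonempty_inter_of_measure_diff_add_lt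
      ((ENNReal.add_lt_add (hdefect i) (hdefect j)).trans_le (two_mul η ▸ hpair i j hij))
  obtain ⟨x, hx⟩ := hX.nonempty
  obtain ⟨i₀, -⟩ := mem_iUnion.1 (hXT ▸ hx)
  set C := connectedComponentIn (X \ Y) (a i₀)
  have hAC : ⋃ i, A i ⊆ C := by
    refine IsPreconnected.subset_connectedComponentIn ?_
      (mem_iUnion_of_mem i₀ (mem_connectedComponentIn (ha i₀))) (iUnion_subset hAX)
    refine .iUnion_of_reflTransGen (fun i => isPreconnected_connectedComponentIn) fun i j => ?_
    exact Relation.ReflTransGen.mono hmeet i j <|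
      reflTransGen_inter_nonempty_of_isPreconnected_iUnion (hXT ▸ hX.isPreconnected) hTc
        (fun i => ⟨a i, (ha i).1⟩) i j
  have hXC : X ⊆ C ∪ ⋃ i, T i \ A i := by
    rw [hXT]
    refine iUnion_subset fun i x hx => ?_
    by_cases hxA : x ∈ A i
    · exact .inl (hAC (mem_iUnion_of_mem i hxA))
    · exact .inr (mem_iUnion_of_mem i ⟨hx, hxA⟩)
  have hXle : μ X ≤ μ C + Fintype.card ι * η := calc
    μ X ≤ μ C + ∑ i, μ (T i \ A i) :=
      (measure_mono hXC).trans <| (measure_union_le _ _).trans <| by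
        gcongr; exact measure_iUnion_fintype_le _ _
    _ ≤ μ C + Fintype.card ι * η := by
      gcongr
      exact (Finset.sum_le_sum fun i _ => (hdefect i).le).trans_eq (by simp)
  have hCpos : 0 < μ C :=
    (zero_le.trans_lt (hA i₀)).trans_le (measure_mono (hAC.trans' (subset_iUnion A i₀)))
  have hXfin : μ X ≠ ∞ := hXT ▸
    ne_top_of_le_ne_top (ENNReal.sum_ne_top.2 fun i _ => hTfin i) (measure_iUnion_fintype_le μ T)
  have hCfin : μ C ≠ ∞ :=
    ne_top_of_le_ne_top hXfin (measure_mono ((connectedComponentIn_subset _ _).trans sdiff_subset))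
  exact ⟨a i₀, hAX i₀ (mem_connectedComponentIn (ha i₀)),
    ENNReal.sub_lt_of_le_add_of_lt hXle hsum hCpos hCfin⟩

theorem stmt6_general {E : Type*} [MetricSpace E] [MeasurableSpace E] [BorelSpace E]
    (n : ℕ) (X' : Set E) (hX'conn : IsConnected X')
    (m : ℕ) (T : Fin m → Set E) (hTcover : X' = ⋃ i, T i)
    (hTball : ∀ i, IsBiLipschitzBall (n + 1) (T i))
    (hTint : ∀ i j, (T i ∩ T j).Nonempty → 0 < μH[((n : ℝ) + 1)] (T i ∩ T j))
    (hTiso : ∀ i, ∀ ξ' : ℝ, 0 < ξ' → ∃ εi : ℝ, 0 < εi ∧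
      ∀ Y : Set E, Y ⊆ T i → IsRectifiableSet n Y → μH[(n : ℝ)] Y < ENNReal.ofReal εi →
        ∃ a ∈ T i \ Y, μH[((n : ℝ) + 1)] (T i) - ENNReal.ofReal ξ' <
          μH[((n : ℝ) + 1)] (connectedComponentIn (T i \ Y) a)) :
    ∀ ξ : ℝ, 0 < ξ → ∃ ε : ℝ, 0 < ε ∧
      ∀ Y' : Set E, Y' ⊆ X' → IsRectifiableSet n Y' → μH[(n : ℝ)] Y' < ENNReal.ofReal ε →
        ∃ a ∈ X' \ Y', μH[((n : ℝ) + 1)] X' - ENNReal.ofReal (ξ / 2) <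
          μH[((n : ℝ) + 1)] (connectedComponentIn (X' \ Y') a) := by
  intro ξ hξ
  have hTfin i : μH[(n : ℝ) + 1] (T i) ≠ ∞ := by
    simpa using (hTball i).hausdorffMeasure_ne_top
  have hpair : ∀ᶠ ξ' in 𝓝 (0 : ℝ), ∀ i j, (T i ∩ T j).Nonempty →
      2 * ENNReal.ofReal ξ' ≤ μH[(n : ℝ) + 1] (T i ∩ T j) :=
    eventually_all.2 fun i => eventually_all.2 fun j => eventually_imp_distrib_left.2 fun hij =>
      (eventually_mul_ofReal_lt ENNReal.ofNat_ne_top (hTint i j hij)).mono fun _ => le_of_lt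
  have hsum := eventually_mul_ofReal_lt (ENNReal.natCast_ne_top (Fintype.card (Fin m)))
    (ENNReal.ofReal_pos.2 (half_pos hξ))
  obtain ⟨ξ', hξ', hpair, hsum⟩ := (hpair.and hsum).exists_gt
  choose εi hεi hiso using fun i => hTiso i ξ' hξ'
  obtain ⟨ε, hε, hεεi⟩ := (eventually_all.2 fun i => eventually_le_nhds (hεi i)).exists_gt
  refine ⟨ε, hε, fun Y' _ hY'rect hY'ε => ?_⟩
  have hY'null : μH[(n : ℝ) + 1] Y' = 0 :=
    (Measure.hausdorffMeasure_zero_or_top (lt_add_one _) Y').resolve_right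
      (hY'ε.trans ENNReal.ofReal_lt_top).ne
  choose a ha hA using fun i => hiso i (Y' ∩ T i) inter_subset_right
    (hY'rect.mono inter_subset_left)
    ((measure_mono inter_subset_left).trans_lt
      (hY'ε.trans_le (ENNReal.ofReal_le_ofReal (hεεi i))))
  simp only [sdiff_inter_self_eq_sdiff] at ha hA
  exact exists_connectedComponentIn_diff_measure_gt hX'conn hTcover
    (fun i => (hTball i).isCompact.isClosed) hTfin hY'null hpair hsum a ha hA

/-- Let X' be a compact connected Lipschitz (n+1)-manifold with boundary,
covered by finitely many bi-Lipschitz balls T₁,…,T_m such that intersecting pairs intersect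
in positive H^{n+1}-measure, and suppose each T i has the isoperimetric property that small
n-measure separating sets leave one component of almost full measure.  Then for every ξ > 0
there is ε > 0 such that any n-rectifiable Y' ⊆ X' with H^n(Y') < ε leaves a connected
component A of X' \ Y' with H^{n+1}(A) > H^{n+1}(X') − ξ/2. -/
theorem stmt6 {E : Type*} [MetricSpace E] [MeasurableSpace E] [BorelSpace E]
    (n : ℕ) (X' : Set E) (hX'm : IsLipschitzManifoldWithBoundary (n + 1) X')
    (hX'c : IsCompact X') (hX'conn : IsConnected X')
    (m : ℕ) (T : Fin m → Set E) (hTcover : X' = ⋃ i, T i) (hTsub : ∀ i, T i ⊆ X')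
    (hTball : ∀ i, IsBiLipschitzBall (n + 1) (T i))
    (hTint : ∀ i j, (T i ∩ T j).Nonempty → 0 < μH[((n : ℝ) + 1)] (T i ∩ T j))
    (hTiso : ∀ i, ∀ ξ' : ℝ, 0 < ξ' → ∃ εi : ℝ, 0 < εi ∧
      ∀ Y : Set E, Y ⊆ T i → IsRectifiableSet n Y → μH[(n : ℝ)] Y < ENNReal.ofReal εi →
        ∃ a ∈ T i \ Y, μH[((n : ℝ) + 1)] (T i) - ENNReal.ofReal ξ' <
          μH[((n : ℝ) + 1)] (connectedComponentIn (T i \ Y) a)) :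
    ∀ ξ : ℝ, 0 < ξ → ∃ ε : ℝ, 0 < ε ∧
      ∀ Y' : Set E, Y' ⊆ X' → IsRectifiableSet n Y' → μH[(n : ℝ)] Y' < ENNReal.ofReal ε →
        ∃ a ∈ X' \ Y', μH[((n : ℝ) + 1)] X' - ENNReal.ofReal (ξ / 2) <
          μH[((n : ℝ) + 1)] (connectedComponentIn (X' \ Y') a) :=
  stmt6_general n X' hX'conn m T hTcover hTball hTint hTiso
end
end
end

section
/- Let A, Y, B be a partition of a straight cone T = C(S) ⊆ ℝᴺ with vertex 0, where A and B are disjoint open cones and Y = Ā ∩ B̄ is a closed subcone. For c > 0 and α > 1 define the horn neighborhood U_W^{c,α} = {x ∈ ℝᴺ : d(x, W) < c‖x‖^α} of a cone W. Then U_T^{c,α} = U_A^{c,α} ∪ U_B^{c,α}, and the tangent cone at 0 of U_A^{c,α} is Ā, of U_B^{c,α} is B̄, and the tangent cone at 0 of the closed set U̅_A^{c,α} ∩ U̅_B^{c,α} is contained in Ā ∩ B̄ = Y. -/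
/-!
A horn neighbourhood of a cone `W` differs from `W` by a set whose distance to `W` is `o(‖x‖)`,
since `c‖x‖^α = o(‖x‖)` for `α > 1`. Blowing up at `0` with the scaling invariance
`d(x/t, W) = d(x, W)/t` of a cone, this error disappears, so the tangent cone of the horn (or of
its closure) lies in `W̄`. Conversely `W` lies in its horn once `0 ∉ W` (true for `A` and `B`,
as `0 ∈ Ā ∩ B̄ = Y`), and `W̄` lies in the tangent cone of `W`. The union formula holds because
`Y ⊆ Ā`, so `d(·, T)` is the minimum of `d(·, A)` and `d(·, B)`.
-/

open Set Filter Topology Metric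

noncomputable section

/-- A straight cone with vertex 0: invariant under multiplication by positive scalars. -/
def IsStraightCone {E : Type*} [NormedAddCommGroup E] [NormedSpace ℝ E] (W : Set E) : Prop :=
  ∀ x ∈ W, ∀ t : ℝ, 0 < t → t • x ∈ W

/-- The horn neighborhood U_W^{c,α} = {x : d(x,W) < c‖x‖^α}. -/
def horn {N : ℕ} (W : Set (EuclideanSpace ℝ (Fin N))) (c α : ℝ) :
    Set (EuclideanSpace ℝ (Fin N)) :=
  {x | infDist x W < c * ‖x‖ ^ α}

open scoped Pointwise

namespace Metric

variable {X : Type*} [PseudoMetricSpace X] {x : X} {s t : Set X}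

theorem infDist_union (hs : s.Nonempty) (ht : t.Nonempty) :
    infDist x (s ∪ t) = min (infDist x s) (infDist x t) := by
  simp only [infDist, infEDist_union]
  exact ENNReal.toReal_min (infEDist_ne_top hs) (infEDist_ne_top ht)

theorem infDist_eq_of_subset_of_subset_closure (hst : s ⊆ t) (hts : t ⊆ closure s) :
    infDist x t = infDist x s := by
  simp only [infDist]
  congr 1
  exact (infEDist_anti hst).antisymm (infEDist_closure (x := x) (s := s) ▸ infEDist_anti hts)

end Metric

theorem seqTangentConeAtZero_mono {E : Type*} [NormedAddCommGroup E] [NormedSpace ℝ E]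
    {S₁ S₂ : Set E} (h : S₁ ⊆ S₂) : seqTangentConeAtZero S₁ ⊆ seqTangentConeAtZero S₂ := by
  rintro v ⟨a, t, ha, ha0, ht, ht0, hv⟩
  exact ⟨a, t, fun n => h (ha n), ha0, ht, ht0, hv⟩

namespace IsStraightCone

variable {E : Type*} [NormedAddCommGroup E] [NormedSpace ℝ E] {W : Set E}

theorem smul_set_eq (hW : IsStraightCone W) {s : ℝ} (hs : 0 < s) : s • W = W := by
  refine (smul_set_subset_iff.2 fun x hx => hW x hx s hs).antisymm fun x hx => ?_
  exact ⟨s⁻¹ • x, hW x hx _ (inv_pos.2 hs), smul_inv_smul₀ hs.ne' x⟩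

theorem infDist_smul (hW : IsStraightCone W) {s : ℝ} (hs : 0 < s) (x : E) :
    infDist (s • x) W = s * infDist x W := by
  calc infDist (s • x) W = infDist (s • x) (s • W) := by rw [hW.smul_set_eq hs]
    _ = s * infDist x W := by rw [infDist_smul₀ hs.ne', Real.norm_of_nonneg hs.le]

theorem zero_mem_closure (hW : IsStraightCone W) (hne : W.Nonempty) : (0 : E) ∈ closure W := by
  obtain ⟨a, ha⟩ := hne
  have hlim : Tendsto (fun t : ℝ => t • a) (𝓝[>] 0) (𝓝 0) :=
    (((continuous_id.smul continuous_const).tendsto' 0 0 (zero_smul ℝ a))).mono_left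
      nhdsWithin_le_nhds
  exact mem_closure_of_tendsto hlim (eventually_nhdsWithin_of_forall fun t ht => hW a ha t ht)

theorem closure_subset_seqTangentConeAtZero (hW : IsStraightCone W) :
    closure W ⊆ seqTangentConeAtZero W := by
  intro v hv
  obtain ⟨u, hu, hlim⟩ := mem_closure_iff_seq_limit.mp hv
  have ht := tendsto_one_div_add_atTop_nhds_zero_nat (𝕜 := ℝ)
  refine ⟨fun n => (1 / (n + 1 : ℝ)) • u n, fun n => 1 / (n + 1 : ℝ),
    fun n => hW _ (hu n) _ (by positivity), by simpa using ht.smul hlim, fun n => by positivity,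
    ht, ?_⟩
  refine hlim.congr fun n => ?_
  rw [inv_smul_smul₀ (by positivity)]

theorem seqTangentConeAtZero_subset_closure (hW : IsStraightCone W) (hne : W.Nonempty)
    {S : Set E} {c α : ℝ} (hα : 1 < α) (hS : ∀ x ∈ S, infDist x W ≤ c * ‖x‖ ^ α) :
    seqTangentConeAtZero S ⊆ closure W := by
  rintro v ⟨a, t, ha, ha0, ht, -, hlim⟩
  have hbound : ∀ n, infDist ((t n)⁻¹ • a n) W ≤ c * ‖a n‖ ^ (α - 1) * ‖(t n)⁻¹ • a n‖ := by
    intro n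
    have hsplit : ‖a n‖ ^ α = ‖a n‖ ^ (α - 1) * ‖a n‖ := by
      conv_lhs => rw [← sub_add_cancel α 1]
      rw [Real.rpow_add' (norm_nonneg _) (by linarith), Real.rpow_one]
    have htn := inv_pos.2 (ht n)
    calc infDist ((t n)⁻¹ • a n) W = (t n)⁻¹ * infDist (a n) W := hW.infDist_smul htn _
      _ ≤ (t n)⁻¹ * (c * ‖a n‖ ^ α) := mul_le_mul_of_nonneg_left (hS _ (ha n)) htn.le
      _ = c * ‖a n‖ ^ (α - 1) * ‖(t n)⁻¹ • a n‖ := by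
        rw [norm_smul, Real.norm_of_nonneg htn.le, hsplit]; ring
  have hpow : Tendsto (fun n => ‖a n‖ ^ (α - 1)) atTop (𝓝 0) := by
    have := ((Real.continuousAt_rpow_const 0 (α - 1) (Or.inr (by linarith))).tendsto).comp
      (tendsto_zero_iff_norm_tendsto_zero.1 ha0)
    rwa [Real.zero_rpow (by linarith)] at this
  have hdist : Tendsto (fun n => infDist ((t n)⁻¹ • a n) W) atTop (𝓝 0) := by
    refine squeeze_zero (fun n => infDist_nonneg) hbound ?_
    simpa using (tendsto_const_nhds.mul hpow).mul hlim.norm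
  refine (mem_closure_iff_infDist_zero hne).2 (tendsto_nhds_unique ?_ hdist)
  exact ((continuous_infDist_pt W).tendsto v).comp hlim

end IsStraightCone

section Horn

variable {N : ℕ} {W : Set (EuclideanSpace ℝ (Fin N))} {c α : ℝ}

theorem horn_union {s t : Set (EuclideanSpace ℝ (Fin N))} (hs : s.Nonempty) (ht : t.Nonempty) :
    horn (s ∪ t) c α = horn s c α ∪ horn t c α := by
  ext x
  simp only [horn, mem_ofPred_eq, mem_union, infDist_union hs ht, min_lt_iff]

theorem horn_eq_of_subset_of_subset_closure {s t : Set (EuclideanSpace ℝ (Fin N))} (hst : s ⊆ t)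
    (hts : t ⊆ closure s) : horn t c α = horn s c α := by
  ext x
  simp only [horn, mem_ofPred_eq, infDist_eq_of_subset_of_subset_closure hst hts]

theorem subset_horn (h0 : 0 ∉ W) (hc : 0 < c) : W ⊆ horn W c α := fun x hx => by
  have hx0 : 0 < ‖x‖ := norm_pos_iff.2 fun h => h0 (h ▸ hx)
  simp only [horn, mem_ofPred_eq, infDist_zero_of_mem hx]
  positivity

theorem infDist_le_of_mem_closure_horn (hα : 0 ≤ α) {x : EuclideanSpace ℝ (Fin N)}
    (hx : x ∈ closure (horn W c α)) : infDist x W ≤ c * ‖x‖ ^ α := by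
  have hcl : IsClosed {x : EuclideanSpace ℝ (Fin N) | infDist x W ≤ c * ‖x‖ ^ α} :=
    isClosed_le (continuous_infDist_pt W)
      (continuous_const.mul (continuous_norm.rpow_const fun _ => Or.inr hα))
  exact hcl.closure_subset_iff.2 (fun y hy => (show infDist y W < c * ‖y‖ ^ α from hy).le) hx

theorem seqTangentConeAtZero_closure_horn_subset (hW : IsStraightCone W) (hne : W.Nonempty)
    (hα : 1 < α) : seqTangentConeAtZero (closure (horn W c α)) ⊆ closure W :=
  hW.seqTangentConeAtZero_subset_closure hne hα fun _ hx =>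
    infDist_le_of_mem_closure_horn (by linarith) hx

theorem seqTangentConeAtZero_horn (hW : IsStraightCone W) (hne : W.Nonempty) (h0 : 0 ∉ W)
    (hc : 0 < c) (hα : 1 < α) : seqTangentConeAtZero (horn W c α) = closure W :=
  ((seqTangentConeAtZero_mono subset_closure).trans
      (seqTangentConeAtZero_closure_horn_subset hW hne hα)).antisymm
    (hW.closure_subset_seqTangentConeAtZero.trans (seqTangentConeAtZero_mono (subset_horn h0 hc)))

end Horn

theorem stmt11_general (N : ℕ) (T A B Y : Set (EuclideanSpace ℝ (Fin N)))
    (hA : IsStraightCone A) (hB : IsStraightCone B)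
    (hAne : A.Nonempty) (hBne : B.Nonempty)
    (hpart : T = A ∪ Y ∪ B)
    (hAYdisj : Disjoint A Y) (hBYdisj : Disjoint B Y)
    (hYeq : Y = closure A ∩ closure B)
    (c α : ℝ) (hc : 0 < c) (hα : 1 < α) :
    horn T c α = horn A c α ∪ horn B c α ∧
    seqTangentConeAtZero (horn A c α) = closure A ∧
    seqTangentConeAtZero (horn B c α) = closure B ∧
    seqTangentConeAtZero (closure (horn A c α) ∩ closure (horn B c α)) ⊆ Y := by
  subst hpart hYeq
  have h0Y : (0 : EuclideanSpace ℝ (Fin N)) ∈ closure A ∩ closure B :=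
    ⟨hA.zero_mem_closure hAne, hB.zero_mem_closure hBne⟩
  have hAB_sub : A ∪ B ⊆ A ∪ (closure A ∩ closure B) ∪ B :=
    union_subset_union_left B subset_union_left
  have hsub_closure : A ∪ (closure A ∩ closure B) ∪ B ⊆ closure (A ∪ B) := by
    rw [closure_union]
    exact union_subset_union (union_subset subset_closure inter_subset_left) subset_closure
  refine ⟨?_, seqTangentConeAtZero_horn hA hAne (hAYdisj.notMem_of_mem_right h0Y) hc hα,
    seqTangentConeAtZero_horn hB hBne (hBYdisj.notMem_of_mem_right h0Y) hc hα, ?_⟩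
  · rw [horn_eq_of_subset_of_subset_closure hAB_sub hsub_closure, horn_union hAne hBne]
  · exact subset_inter
      ((seqTangentConeAtZero_mono inter_subset_left).trans
        (seqTangentConeAtZero_closure_horn_subset hA hAne hα))
      ((seqTangentConeAtZero_mono inter_subset_right).trans
        (seqTangentConeAtZero_closure_horn_subset hB hBne hα))

/-- Let T = A ∪ Y ∪ B be a partition of a straight cone, with A, B disjoint
nonempty open (in T) cones and Y = Ā ∩ B̄ a closed subcone.  For c > 0, α > 1:
U_T = U_A ∪ U_B, the tangent cones at 0 of U_A and U_B are Ā and B̄ respectively, and the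
tangent cone at 0 of the closed set U̅_A ∩ U̅_B is contained in Y. -/
theorem stmt11 (N : ℕ) (T A B Y : Set (EuclideanSpace ℝ (Fin N)))
    (hT : IsStraightCone T) (hA : IsStraightCone A) (hB : IsStraightCone B)
    (hY : IsStraightCone Y)
    (hAne : A.Nonempty) (hBne : B.Nonempty)
    (hpart : T = A ∪ Y ∪ B) (hABdisj : Disjoint A B)
    (hAYdisj : Disjoint A Y) (hBYdisj : Disjoint B Y)
    (hAopen : ∃ O, IsOpen O ∧ A = T ∩ O) (hBopen : ∃ O, IsOpen O ∧ B = T ∩ O)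
    (hYcl : IsClosed Y) (hYeq : Y = closure A ∩ closure B)
    (c α : ℝ) (hc : 0 < c) (hα : 1 < α) :
    horn T c α = horn A c α ∪ horn B c α ∧
    seqTangentConeAtZero (horn A c α) = closure A ∧
    seqTangentConeAtZero (horn B c α) = closure B ∧
    seqTangentConeAtZero (closure (horn A c α) ∩ closure (horn B c α)) ⊆ Y :=
  stmt11_general N T A B Y hA hB hAne hBne hpart hAYdisj hBYdisj hYeq c α hc hα

end
end

section
/- Let X ⊆ ℝᵐ be a normally embedded closed semialgebraic set (inner and outer metrics bi-Lipschitz equivalent), x ∈ X, and let Y ⊆ X be a semialgebraic separating set at x with corresponding pieces A, B (A ∩ B = {x}, X \ Y = (A\{x}) ∪ (B\{x}) near x, and A, B of positive n-density at x). Suppose γ₁ : [0,r) → A and γ₂ : [0,r) → B are semialgebraic arcs with |γᵢ(t) − x| = t and lim_{t→0⁺}(γ₁(t) − x)/t = v = lim_{t→0⁺}(γ₂(t) − x)/t for a unit vector v. Then v ∈ S_xY, i.e., v is a unit tangent vector of Y at x. -/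
/-- Semialgebraic subsets of ℝⁿ: the boolean algebra generated by zero sets and positivity
sets of real polynomials (by Tarski–Seidenberg this is closed under projections). -/
inductive IsSemialgebraic {n : ℕ} : Set (EuclideanSpace ℝ (Fin n)) → Prop
  | eqZero (p : MvPolynomial (Fin n) ℝ) :
      IsSemialgebraic {x | MvPolynomial.eval (fun i => x i) p = 0}
  | pos (p : MvPolynomial (Fin n) ℝ) :
      IsSemialgebraic {x | 0 < MvPolynomial.eval (fun i => x i) p}
  | union {s t} : IsSemialgebraic s → IsSemialgebraic t → IsSemialgebraic (s ∪ t)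
  | inter {s t} : IsSemialgebraic s → IsSemialgebraic t → IsSemialgebraic (s ∩ t)
  | compl {s} : IsSemialgebraic s → IsSemialgebraic sᶜ

open MeasureTheory Metric Filter Set Topology
open scoped ENNReal NNReal

noncomputable section

variable {E : Type*} [MetricSpace E] [MeasurableSpace E] [BorelSpace E]

noncomputable section

/-- The inner (length-metric) distance on a subset `X`: the infimum of lengths of continuous
paths in `X` joining two points. -/
def innerDist {E : Type*} [MetricSpace E] (X : Set E) (p q : E) : ℝ≥0∞ :=
  ⨅ (γ : ℝ → E) (_ : ContinuousOn γ (Icc 0 1)) (_ : MapsTo γ (Icc 0 1) X)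
    (_ : γ 0 = p) (_ : γ 1 = q), eVariationOn γ (Icc 0 1)

/-- A germ bi-Lipschitz homeomorphism with respect to inner metrics. -/
def InnerBiLipGermEquiv {E F : Type*} [MetricSpace E] [MetricSpace F]
    (X : Set E) (x₀ : E) (Z : Set F) (z₀ : F) : Prop :=
  ∃ (f : E → F) (r r' K : ℝ), 0 < r ∧ 0 < r' ∧ 1 ≤ K ∧ f x₀ = z₀ ∧
    Set.BijOn f (X ∩ ball x₀ r) (Z ∩ ball z₀ r') ∧
    ∀ p ∈ X ∩ ball x₀ r, ∀ q ∈ X ∩ ball x₀ r,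
      innerDist Z (f p) (f q) ≤ ENNReal.ofReal K * innerDist X p q ∧
      innerDist X p q ≤ ENNReal.ofReal K * innerDist Z (f p) (f q)


/-- Tangent cone of `A` at `x`: limits of (aₙ - x)/tₙ, aₙ ∈ A, aₙ → x, tₙ → 0⁺. -/
def seqTangentCone {V : Type*} [NormedAddCommGroup V] [NormedSpace ℝ V]
    (A : Set V) (x : V) : Set V :=
  {v | ∃ (a : ℕ → V) (t : ℕ → ℝ), (∀ n, a n ∈ A) ∧ Filter.Tendsto a Filter.atTop (nhds x) ∧
    (∀ n, 0 < t n) ∧ Filter.Tendsto t Filter.atTop (nhds 0) ∧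
    Filter.Tendsto (fun n => (t n)⁻¹ • (a n - x)) Filter.atTop (nhds v)}

/-- Let X be normally embedded closed semialgebraic, Y a separating set of X
at x with pieces A, B. If γ₁ ⊆ A and γ₂ ⊆ B are arcs with |γᵢ(t) − x| = t and common unit
tangent vector v at x, then v is a unit tangent vector of Y at x, i.e. v ∈ S_xY. -/
theorem stmt13 (m nd : ℕ) (X : Set (EuclideanSpace ℝ (Fin m)))
    (hXcl : IsClosed X) (hXsa : IsSemialgebraic X)
    -- X is normally embedded
    (hNE : ∃ K : ℝ, 1 ≤ K ∧ ∀ p ∈ X, ∀ q ∈ X,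
      innerDist X p q ≤ ENNReal.ofReal (K * dist p q))
    (x : EuclideanSpace ℝ (Fin m)) (hx : x ∈ X)
    (Y A B : Set (EuclideanSpace ℝ (Fin m))) (hYX : Y ⊆ X) (hxY : x ∈ Y)
    (hYsa : IsSemialgebraic Y) (hYsep : IsSeparatingSet nd X x Y)
    (hAX : A ⊆ X) (hBX : B ⊆ X)
    (hAB : A ∩ B = {x})
    (hsplit : ∃ r : ℝ, 0 < r ∧ (X ∩ Metric.ball x r) \ Y = (A \ {x}) ∪ (B \ {x}))
    (hAopen : ∃ O, IsOpen O ∧ A \ {x} = X ∩ O) (hBopen : ∃ O, IsOpen O ∧ B \ {x} = X ∩ O)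
    (hAdens : infDensity nd A x ≠ 0) (hBdens : infDensity nd B x ≠ 0)
    (r : ℝ) (hr : 0 < r) (γ₁ γ₂ : ℝ → EuclideanSpace ℝ (Fin m))
    (hγ₁c : ContinuousOn γ₁ (Ico 0 r)) (hγ₂c : ContinuousOn γ₂ (Ico 0 r))
    (hγ₁A : ∀ t ∈ Ioo (0:ℝ) r, γ₁ t ∈ A \ {x}) (hγ₂B : ∀ t ∈ Ioo (0:ℝ) r, γ₂ t ∈ B \ {x})
    (hγ₁d : ∀ t ∈ Ico (0:ℝ) r, dist (γ₁ t) x = t) (hγ₂d : ∀ t ∈ Ico (0:ℝ) r, dist (γ₂ t) x = t)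
    (v : EuclideanSpace ℝ (Fin m)) (hv : ‖v‖ = 1)
    (hv₁ : Filter.Tendsto (fun t : ℝ => t⁻¹ • (γ₁ t - x)) (𝓝[>] 0) (nhds v))
    (hv₂ : Filter.Tendsto (fun t : ℝ => t⁻¹ • (γ₂ t - x)) (𝓝[>] 0) (nhds v)) :
    v ∈ seqTangentCone Y x := by
  classical
  obtain ⟨K, hK1, hKle⟩ := hNE
  obtain ⟨rs, hrs, hsplitEq⟩ := hsplit
  obtain ⟨OA, hOAopen, hAeq⟩ := hAopen
  obtain ⟨OB, hOBopen, hBeq⟩ := hBopen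
  have hK0 : (0:ℝ) < K := lt_of_lt_of_le one_pos hK1
  -- the normalized gap between the two arcs tends to 0
  have hδ : Tendsto (fun t : ℝ => t⁻¹ * dist (γ₁ t) (γ₂ t)) (𝓝[>] (0:ℝ)) (𝓝 0) := by
    have h0 : Tendsto (fun t : ℝ => ‖t⁻¹ • (γ₁ t - x) - t⁻¹ • (γ₂ t - x)‖)
        (𝓝[>] (0:ℝ)) (𝓝 0) := by
      simpa using (hv₁.sub hv₂).norm
    refine h0.congr' ?_
    filter_upwards [self_mem_nhdsWithin] with t (ht : (0:ℝ) < t)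
    rw [← smul_sub, norm_smul, Real.norm_eq_abs, abs_inv, abs_of_pos ht,
      dist_eq_norm]
    congr 2
    abel
  -- eventually the gap is much smaller than t
  have hsmall : ∀ᶠ t in 𝓝[>] (0:ℝ), 2*K*dist (γ₁ t) (γ₂ t) < t/2 := by
    have h1 : ∀ᶠ t in 𝓝[>] (0:ℝ), t⁻¹ * dist (γ₁ t) (γ₂ t) < (4*K)⁻¹ :=
      hδ.eventually_lt_const (by positivity)
    filter_upwards [h1, self_mem_nhdsWithin] with t ht (ht0 : (0:ℝ) < t)
    have hd : dist (γ₁ t) (γ₂ t) < t * (4*K)⁻¹ := by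
      have := mul_lt_mul_of_pos_left ht ht0
      rwa [show t * (t⁻¹ * dist (γ₁ t) (γ₂ t)) = dist (γ₁ t) (γ₂ t) by
        field_simp] at this
    have heq : 2*K*(t * (4*K)⁻¹) = t/2 := by field_simp; ring
    nlinarith [hd, hK0]
  -- key: eventually there is a point of Y close to γ₁ t
  have key : ∀ᶠ t in 𝓝[>] (0:ℝ), ∃ y ∈ Y,
      dist y (γ₁ t) ≤ 2*K*dist (γ₁ t) (γ₂ t) := by
    have hmem : Ioo (0:ℝ) (min r (rs/2)) ∈ 𝓝[>] (0:ℝ) :=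
      Ioo_mem_nhdsGT_of_mem ⟨le_refl 0, by positivity⟩
    filter_upwards [hsmall, hmem] with t hts htI
    obtain ⟨ht0, htlt⟩ := htI
    have htr : t < r := lt_of_lt_of_le htlt (min_le_left _ _)
    have htrs : t < rs/2 := lt_of_lt_of_le htlt (min_le_right _ _)
    have hp := hγ₁A t ⟨ht0, htr⟩
    have hq := hγ₂B t ⟨ht0, htr⟩
    set p := γ₁ t with hp_def
    set q := γ₂ t with hq_def
    have hpq : p ≠ q := by
      intro h
      have hmem : p ∈ A ∩ B := ⟨hp.1, h ▸ hq.1⟩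
      rw [hAB] at hmem
      exact hp.2 hmem
    have hd0 : 0 < dist p q := dist_pos.2 hpq
    have hinner : innerDist X p q < ENNReal.ofReal (2*K*dist p q) := by
      refine lt_of_le_of_lt (hKle p (hAX hp.1) q (hBX hq.1)) ?_
      refine (ENNReal.ofReal_lt_ofReal_iff (by positivity)).2 ?_
      nlinarith
    rw [innerDist] at hinner
    simp only [iInf_lt_iff] at hinner
    obtain ⟨γ, hγc, hγm, hγ0, hγ1, hγvar⟩ := hinner
    have hclose : ∀ s ∈ Icc (0:ℝ) 1, dist (γ s) p ≤ 2*K*dist p q := by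
      intro s hs
      have h1 : edist (γ s) (γ 0) ≤ eVariationOn γ (Icc 0 1) :=
        eVariationOn.edist_le γ hs ⟨le_refl 0, zero_le_one⟩
      have h2 : edist (γ s) p < ENNReal.ofReal (2*K*dist p q) := by
        have h2' := lt_of_le_of_lt h1 hγvar
        rwa [hγ0] at h2'
      rw [edist_dist] at h2
      exact le_of_lt ((ENNReal.ofReal_lt_ofReal_iff (by positivity)).1 h2)
    by_contra hno
    push_neg at hno
    have himg : ∀ s ∈ Icc (0:ℝ) 1, γ s ∈ (X ∩ ball x rs) \ Y := by
      intro s hs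
      refine ⟨⟨hγm hs, ?_⟩, ?_⟩
      · have htri : dist (γ s) x ≤ dist (γ s) p + dist p x := dist_triangle _ _ _
        have hdx : dist p x = t := hγ₁d t ⟨le_of_lt ht0, htr⟩
        have hb := hclose s hs
        rw [mem_ball]
        rw [hdx] at htri
        linarith [hts]
      · intro hY
        exact absurd (hclose s hs) (not_le.2 (hno _ hY))
    have himg' : γ '' Icc (0:ℝ) 1 ⊆ (X ∩ OA) ∪ (X ∩ OB) := by
      rintro z ⟨s, hs, rfl⟩
      have hz := himg s hs
      rw [hsplitEq] at hz
      rcases hz with h | h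
      · exact Or.inl (hAeq ▸ h)
      · exact Or.inr (hBeq ▸ h)
    have hpre : IsPreconnected (γ '' Icc (0:ℝ) 1) := isPreconnected_Icc.image γ hγc
    have hsub : γ '' Icc (0:ℝ) 1 ⊆ OA ∪ OB := fun z hz =>
      (himg' hz).elim (fun h => Or.inl h.2) (fun h => Or.inr h.2)
    have hpmem : p ∈ γ '' Icc (0:ℝ) 1 := ⟨0, ⟨le_refl 0, zero_le_one⟩, hγ0⟩
    have hqmem : q ∈ γ '' Icc (0:ℝ) 1 := ⟨1, ⟨zero_le_one, le_refl 1⟩, hγ1⟩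
    have hne1 : (γ '' Icc (0:ℝ) 1 ∩ OA).Nonempty :=
      ⟨p, hpmem, (hAeq ▸ hp : p ∈ X ∩ OA).2⟩
    have hne2 : (γ '' Icc (0:ℝ) 1 ∩ OB).Nonempty :=
      ⟨q, hqmem, (hBeq ▸ hq : q ∈ X ∩ OB).2⟩
    obtain ⟨z, hzs, hzA, hzB⟩ := hpre OA OB hOAopen hOBopen hsub hne1 hne2
    have hzX : z ∈ X := (himg' hzs).elim (fun h => h.1) (fun h => h.1)
    have hzA' : z ∈ A \ {x} := hAeq.symm ▸ (⟨hzX, hzA⟩ : z ∈ X ∩ OA)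
    have hzB' : z ∈ B \ {x} := hBeq.symm ▸ (⟨hzX, hzB⟩ : z ∈ X ∩ OB)
    have hzab : z ∈ A ∩ B := ⟨hzA'.1, hzB'.1⟩
    rw [hAB] at hzab
    exact hzA'.2 hzab
  -- extract a threshold
  obtain ⟨c, hc, hkey⟩ : ∃ c, 0 < c ∧ ∀ t ∈ Ioo (0:ℝ) c, ∃ y ∈ Y,
      dist y (γ₁ t) ≤ 2*K*dist (γ₁ t) (γ₂ t) := by
    rcases mem_nhdsGT_iff_exists_Ioo_subset.1 key with ⟨c, hc', hsub⟩
    exact ⟨c, hc', fun t ht => hsub ht⟩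
  -- build the sequence
  set t : ℕ → ℝ := fun n => c / ((n:ℝ) + 2) with ht_def
  have htpos : ∀ n, 0 < t n := fun n => by positivity
  have htmem : ∀ n, t n ∈ Ioo 0 c := by
    intro n
    refine ⟨htpos n, ?_⟩
    rw [div_lt_iff₀ (by positivity)]
    nlinarith [Nat.cast_nonneg (α := ℝ) n, hc]
  have ht0 : Tendsto t atTop (𝓝 0) := by
    have h2 : Tendsto (fun n : ℕ => (n:ℝ) + 2) atTop atTop :=
      tendsto_atTop_add_const_right _ _ tendsto_natCast_atTop_atTop
    exact Tendsto.div_atTop tendsto_const_nhds h2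
  have htW : Tendsto t atTop (𝓝[>] (0:ℝ)) :=
    tendsto_nhdsWithin_of_tendsto_nhds_of_eventually_within _ ht0
      (Eventually.of_forall fun n => htpos n)
  choose y hyY hyd using fun n => hkey (t n) (htmem n)
  have hs2 : Tendsto (fun n => (t n)⁻¹ • (y n - x)) atTop (𝓝 v) := by
    have h1 : Tendsto (fun n => (t n)⁻¹ • (γ₁ (t n) - x)) atTop (𝓝 v) := hv₁.comp htW
    have h2 : Tendsto (fun n => (t n)⁻¹ • (y n - γ₁ (t n))) atTop (𝓝 0) := by
      apply squeeze_zero_norm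
        (a := fun n => 2*K*((t n)⁻¹ * dist (γ₁ (t n)) (γ₂ (t n))))
      · intro n
        rw [norm_smul, Real.norm_eq_abs, abs_inv, abs_of_pos (htpos n)]
        calc (t n)⁻¹ * ‖y n - γ₁ (t n)‖
            ≤ (t n)⁻¹ * (2*K*dist (γ₁ (t n)) (γ₂ (t n))) := by
              refine mul_le_mul_of_nonneg_left ?_ (by positivity)
              rw [← dist_eq_norm]; exact hyd n
          _ = 2*K*((t n)⁻¹ * dist (γ₁ (t n)) (γ₂ (t n))) := by ring
      · have h3 := (hδ.comp htW).const_mul (2*K)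
        simpa using h3
    have h3 := h1.add h2
    rw [add_zero] at h3
    refine h3.congr fun n => ?_
    rw [← smul_add]
    congr 1
    abel
  have ha : Tendsto y atTop (𝓝 x) := by
    have h1 := ht0.smul hs2
    rw [zero_smul] at h1
    have h2 : Tendsto (fun n => y n - x) atTop (𝓝 0) :=
      h1.congr fun n => smul_inv_smul₀ (htpos n).ne' _
    have h3 := h2.add (tendsto_const_nhds (x := x))
    simpa using h3
  exact ⟨y, t, hyY, ha, htpos, ht0, hs2⟩

end
end
end
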